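/- arXiv:math/0402320 — 3 statements merged into one kernel-verified Lean document; each statement's English description precedes it below -/
import Mathlib

section
/- The k-conjugation map λ ↦ λ^{ω_k} := 𝔭(𝔠(λ)'), sending a k-bounded partition λ to the partition whose parts are the numbers of k-bounded hooks in the columns of the (k+1)-core 𝔠(λ), is an involution on the set of k-bounded partitions. -/
open scoped Classical

/-- A partition given as a weakly decreasing, finitely supported
function `ℕ → ℕ` (row `i`, counted from the bottom, has `p i` cells). -/
def IsPartitionFun (p : ℕ → ℕ) : Prop :=
  (∀ i, p (i + 1) ≤ p i) ∧ ∃ N, ∀ i, N ≤ i → p i = 0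

/-- Hook length of the square `(i, j)` (0-indexed) in the partition `p`. -/
noncomputable def hookLen (p : ℕ → ℕ) (i j : ℕ) : ℕ :=
  (p i - j) + Set.ncard {i' : ℕ | i < i' ∧ j < p i'}

/-- A partition is an `m`-core if no cell has hook length `m`. -/
def IsCore (m : ℕ) (p : ℕ → ℕ) : Prop :=
  ∀ i j, j < p i → hookLen p i j ≠ m

/-- Number of cells of row `i` of `p` whose hook length is at most `k`. -/
noncomputable def rowKB (k : ℕ) (p : ℕ → ℕ) (i : ℕ) : ℕ :=
  Set.ncard {j : ℕ | j < p i ∧ hookLen p i j ≤ k}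

/-- Number of cells of column `j` of `p` whose hook length is at most `k`. -/
noncomputable def colKB (k : ℕ) (p : ℕ → ℕ) (j : ℕ) : ℕ :=
  Set.ncard {i : ℕ | j < p i ∧ hookLen p i j ≤ k}

/-- The `(k+1)`-residue of the square `(i, j)`, namely `j - i mod (k+1)`. -/
def res (k i j : ℕ) : ZMod (k + 1) := (j : ZMod (k + 1)) - (i : ZMod (k + 1))

/-- The conjugate partition. -/
noncomputable def conjFun (p : ℕ → ℕ) (j : ℕ) : ℕ := Set.ncard {i : ℕ | j < p i}

/-!
Since `𝔭` is injective on `(k+1)`-cores, `δ` and `γ'` — both `(k+1)`-cores with image `μ` —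
coincide, whence `𝔭(δ') = 𝔭(γ) = lam`.

Injectivity: if two cores `p`, `q` agree above row `i` and `p i < q i`, then row `i` of `q` has
more `k`-bounded cells. Writing `f j = j - leg(i, j)`, which depends only on the rows above `i` and
is injective, the cells of row `i` of `p` with hook length `> k` are the `j` with
`f j ≤ p i - k - 1`. For the core `q` the value `q i - k - 1` is omitted by `f`, so passing from
`p i` to `q i` adds fewer than `q i - p i` such cells.
-/

lemma Set.ncard_setOf_le_add_one_le {α : Type*} {f : α → ℤ} (hf : Function.Injective f)
    {v x y : ℤ} (hv : v ∉ Set.range f) (hxv : x < v) (hvy : v ≤ y) :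
    {a | f a ≤ y}.ncard + 1 ≤ {a | f a ≤ x}.ncard + (y - x).toNat := by
  have hsplit : {a | f a ≤ y} = {a | f a ≤ x} ∪ {a | x < f a ∧ f a ≤ y} := by
    ext a
    simp only [Set.mem_ofPred_eq, Set.mem_union]
    omega
  have hmid : {a | x < f a ∧ f a ≤ y}.ncard ≤ (Set.Ioc x y \ {v}).ncard :=
    Set.ncard_le_ncard_of_injOn f
      (fun a ha => ⟨ha, fun hfa => hv ⟨a, hfa⟩⟩) hf.injOn (Set.finite_Ioc x y).sdiff
  rw [Set.ncard_sdiff_singleton_of_mem (Set.mem_Ioc.2 ⟨hxv, hvy⟩), ← Finset.coe_Ioc,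
    Set.ncard_coe_finset, Int.card_Ioc] at hmid
  have hunion := Set.ncard_union_le {a | f a ≤ x} {a | x < f a ∧ f a ≤ y}
  rw [← hsplit] at hunion
  omega

namespace IsPartitionFun

variable {p : ℕ → ℕ}

protected lemma antitone (hp : IsPartitionFun p) : Antitone p :=
  antitone_nat_of_succ_le hp.1

lemma setOf_lt_eq_Iio (hp : IsPartitionFun p) (j : ℕ) :
    {i | j < p i} = Set.Iio (conjFun p j) := by
  have hex : ∃ i, p i ≤ j := by
    obtain ⟨N, hN⟩ := hp.2
    exact ⟨N, by simp [hN N le_rfl]⟩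
  have hIio : {i | j < p i} = Set.Iio (Nat.find hex) := by
    ext i
    simp only [Set.mem_ofPred_eq, Set.mem_Iio, Nat.lt_find_iff, not_le]
    exact ⟨fun h m hm => h.trans_le (hp.antitone hm), fun h => h i le_rfl⟩
  rw [conjFun, hIio, Set.ncard_Iio_nat]

lemma finite_setOf_lt (hp : IsPartitionFun p) (j : ℕ) : {i | j < p i}.Finite :=
  hp.setOf_lt_eq_Iio j ▸ Set.finite_Iio _

lemma lt_conjFun_iff (hp : IsPartitionFun p) {i j : ℕ} : i < conjFun p j ↔ j < p i := by
  rw [← Set.mem_Iio, ← hp.setOf_lt_eq_Iio, Set.mem_ofPred_eq]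

lemma conjFun_conjFun (hp : IsPartitionFun p) : conjFun (conjFun p) = p := by
  funext i
  rw [← Set.ncard_Iio_nat (p i), conjFun]
  congr 1
  ext j
  exact hp.lt_conjFun_iff

lemma hookLen_eq (hp : IsPartitionFun p) {i j : ℕ} (hij : j < p i) :
    hookLen p i j = p i + conjFun p j - i - j - 1 := by
  have hleg : {i' | i < i' ∧ j < p i'} = Set.Ioo i (conjFun p j) := by
    ext i'
    simp only [Set.mem_ofPred_eq, Set.mem_Ioo, hp.lt_conjFun_iff]
  have := hp.lt_conjFun_iff.2 hij
  rw [hookLen, hleg, Set.ncard_Ioo_nat]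
  omega

protected lemma conjFun (hp : IsPartitionFun p) : IsPartitionFun (conjFun p) := by
  refine ⟨fun j => ?_, p 0, fun j hj => ?_⟩
  · exact Set.ncard_le_ncard (fun i (hi : j + 1 < p i) => (by omega : j < p i))
      (hp.finite_setOf_lt j)
  · by_contra h
    have := (hp.lt_conjFun_iff (i := 0)).1 (Nat.pos_of_ne_zero h)
    omega

lemma hookLen_conjFun (hp : IsPartitionFun p) {i j : ℕ} (hij : j < p i) :
    hookLen (conjFun p) j i = hookLen p i j := by
  rw [hp.conjFun.hookLen_eq (hp.lt_conjFun_iff.2 hij), hp.conjFun_conjFun, hp.hookLen_eq hij]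
  omega

end IsPartitionFun

protected lemma IsCore.conjFun {m : ℕ} {p : ℕ → ℕ} (hp : IsPartitionFun p) (hc : IsCore m p) :
    IsCore m (conjFun p) := fun j i hji => by
  have hij := hp.lt_conjFun_iff.1 hji
  rw [hp.hookLen_conjFun hij]
  exact hc i j hij

noncomputable def legLength (p : ℕ → ℕ) (i j : ℕ) : ℕ := Set.ncard {i' | i < i' ∧ j < p i'}

/-- A cell `(i, j)` of `p` has hook length `≤ k` iff this exceeds `p i - k - 1`. -/
noncomputable def colSubLeg (p : ℕ → ℕ) (i j : ℕ) : ℤ := j - legLength p i j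

section RowKB

variable {p q : ℕ → ℕ} {i j : ℕ}

lemma hookLen_eq_add_legLength : hookLen p i j = (p i - j) + legLength p i j := rfl

lemma legLength_congr (htail : ∀ i', i < i' → p i' = q i') : legLength p i = legLength q i := by
  funext j
  unfold legLength
  congr 1
  ext i'
  simp only [Set.mem_ofPred_eq]
  exact and_congr_right fun hi' => by rw [htail i' hi']

lemma legLength_anti (hp : IsPartitionFun p) (i : ℕ) : Antitone (legLength p i) :=
  fun _ _ hj => Set.ncard_le_ncard (fun _ ⟨hi', h⟩ => ⟨hi', hj.trans_lt h⟩)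
    ((hp.finite_setOf_lt _).subset fun _ h => h.2)

lemma legLength_eq_zero (hp : IsPartitionFun p) (hj : p i ≤ j) : legLength p i j = 0 := by
  have hempty : {i' | i < i' ∧ j < p i'} = ∅ := Set.eq_empty_of_forall_notMem fun i' hi' =>
    (hi'.2.trans_le ((hp.antitone hi'.1.le).trans hj)).false
  rw [legLength, hempty, Set.ncard_empty]

lemma colSubLeg_injective (hp : IsPartitionFun p) (i : ℕ) : Function.Injective (colSubLeg p i) :=
  StrictMono.injective <| strictMono_nat_of_lt_succ fun j => by
    have := legLength_anti hp i (j.le_add_right 1)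
    simp only [colSubLeg]
    omega

lemma rowKB_add_ncard_colSubLeg_le (hp : IsPartitionFun p) (k i : ℕ) :
    rowKB k p i + {j | colSubLeg p i j ≤ p i - k - 1}.ncard = p i := by
  have hcompl : {j | colSubLeg p i j ≤ p i - k - 1}
      = Set.Iio (p i) \ {j | j < p i ∧ hookLen p i j ≤ k} := by
    ext j
    have := legLength_eq_zero hp (i := i) (j := j)
    simp only [Set.mem_ofPred_eq, Set.mem_sdiff, Set.mem_Iio, colSubLeg, hookLen_eq_add_legLength]
    omega
  rw [hcompl, add_comm, rowKB, Set.ncard_sdiff_add_ncard_of_subset (fun j hj => hj.1),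
    Set.ncard_Iio_nat]

lemma IsCore.colSubLeg_ne (hp : IsPartitionFun p) {k : ℕ} (hc : IsCore (k + 1) p) (j : ℕ) :
    colSubLeg p i j ≠ p i - k - 1 := by
  have := hc i j
  have := legLength_eq_zero hp (i := i) (j := j)
  simp only [colSubLeg, hookLen_eq_add_legLength] at *
  omega

lemma rowKB_lt_of_lt {k : ℕ} (hp : IsPartitionFun p) (hq : IsPartitionFun q)
    (hqc : IsCore (k + 1) q) (htail : ∀ i', i < i' → p i' = q i') (hlt : p i < q i) :
    rowKB k p i < rowKB k q i := by
  have hcol : colSubLeg p i = colSubLeg q i := by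
    funext j
    rw [colSubLeg, colSubLeg, legLength_congr htail]
  have hp_row := rowKB_add_ncard_colSubLeg_le hp k i
  have hq_row := rowKB_add_ncard_colSubLeg_le hq k i
  have hgap := Set.ncard_setOf_le_add_one_le (colSubLeg_injective hq i)
    (fun ⟨j, hj⟩ => IsCore.colSubLeg_ne hq hqc j hj)
    (show (p i : ℤ) - k - 1 < q i - k - 1 by omega) le_rfl
  rw [hcol] at hp_row
  rw [show ((q i : ℤ) - k - 1 - (p i - k - 1)).toNat = q i - p i by omega] at hgap
  omega

end RowKB

theorem IsCore.eq_of_rowKB_eq {k : ℕ} {p q : ℕ → ℕ} (hp : IsPartitionFun p)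
    (hq : IsPartitionFun q) (hpc : IsCore (k + 1) p) (hqc : IsCore (k + 1) q)
    (hrow : ∀ i, rowKB k p i = rowKB k q i) : p = q := by
  by_contra hne
  obtain ⟨N, hN⟩ := hp.2
  obtain ⟨M, hM⟩ := hq.2
  have hfin : {i | p i ≠ q i}.Finite := (Set.finite_Iio (max N M)).subset fun i hi => by
    by_contra h
    simp only [Set.mem_Iio, not_lt, max_le_iff] at h
    exact hi (by rw [hN i h.1, hM i h.2])
  obtain ⟨i, hi, hmax⟩ := hfin.exists_maximal (Function.ne_iff.1 hne)
  have htail : ∀ i', i < i' → p i' = q i' := fun i' hii' => by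
    by_contra h
    exact hii'.not_ge (hmax h hii'.le)
  rcases lt_or_gt_of_ne hi with h | h
  · exact (rowKB_lt_of_lt hp hq hqc htail h).ne (hrow i)
  · exact (rowKB_lt_of_lt hq hp hpc (fun i' h' => (htail i' h').symm) h).ne' (hrow i)

theorem stmt3_general (k : ℕ) (lam μ γ δ : ℕ → ℕ)
    (hγ : IsPartitionFun γ) (hγcore : IsCore (k + 1) γ)
    (hδ : IsPartitionFun δ) (hδcore : IsCore (k + 1) δ)
    (h1 : ∀ i, lam i = rowKB k γ i)
    (h2 : ∀ i, μ i = rowKB k (conjFun γ) i)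
    (h3 : ∀ i, μ i = rowKB k δ i) :
    ∀ i, lam i = rowKB k (conjFun δ) i := by
  have hδγ : δ = conjFun γ :=
    hδcore.eq_of_rowKB_eq hδ hγ.conjFun (hγcore.conjFun hγ) fun i => by rw [← h3, h2]
  intro i
  rw [hδγ, hγ.conjFun_conjFun, h1]

/-- `k`-conjugation is an involution on `k`-bounded partitions: if `γ = 𝔠(lam)` is
the `(k+1)`-core corresponding to `lam`, `μ = 𝔭(γ')` is the `k`-conjugate of `lam`,
and `δ = 𝔠(μ)`, then `𝔭(δ') = lam`. -/
theorem stmt3 (k : ℕ) (lam μ γ δ : ℕ → ℕ)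
    (hlam : IsPartitionFun lam) (hlamb : ∀ i, lam i ≤ k)
    (hγ : IsPartitionFun γ) (hγcore : IsCore (k + 1) γ)
    (hδ : IsPartitionFun δ) (hδcore : IsCore (k + 1) δ)
    (h1 : ∀ i, lam i = rowKB k γ i)
    (h2 : ∀ i, μ i = rowKB k (conjFun γ) i)
    (h3 : ∀ i, μ i = rowKB k δ i) :
    ∀ i, lam i = rowKB k (conjFun δ) i :=
  stmt3_general k lam μ γ δ hγ hγcore hδ hδcore h1 h2 h3
end

section
/- If λ and μ are k-bounded partitions with λ ⊆ μ (containment of Young diagrams), then 𝔠(λ) ⊆ 𝔠(μ), where 𝔠 is the inverse of the bijection 𝔭 from (k+1)-cores to k-bounded partitions. -/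
open scoped Classical

lemma legset_fin {p : ℕ → ℕ} (hp : ∃ N, ∀ i, N ≤ i → p i = 0) (i j : ℕ) :
    {i' : ℕ | i < i' ∧ j < p i'}.Finite := by
  obtain ⟨N, hN⟩ := hp
  apply (Set.finite_Iio N).subset
  intro x hx
  simp only [Set.mem_setOf_eq] at hx
  simp only [Set.mem_Iio]
  by_contra h
  push_neg at h
  have := hN x h
  omega

lemma leg_anti {p : ℕ → ℕ} (hp : ∃ N, ∀ i, N ≤ i → p i = 0) (i : ℕ) {j j' : ℕ} (h : j ≤ j') :
    {i' : ℕ | i < i' ∧ j' < p i'}.ncard ≤ {i' : ℕ | i < i' ∧ j < p i'}.ncard :=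
  Set.ncard_le_ncard (fun x hx => ⟨hx.1, lt_of_le_of_lt h hx.2⟩) (legset_fin hp i j)

lemma leg_mono_p {p q : ℕ → ℕ} (hq : ∃ N, ∀ i, N ≤ i → q i = 0) (i j : ℕ)
    (h : ∀ i', i < i' → p i' ≤ q i') :
    {i' : ℕ | i < i' ∧ j < p i'}.ncard ≤ {i' : ℕ | i < i' ∧ j < q i'}.ncard :=
  Set.ncard_le_ncard (fun x hx => ⟨hx.1, lt_of_lt_of_le hx.2 (h x hx.1)⟩) (legset_fin hq i j)

lemma hook_anti {p : ℕ → ℕ} (hp : ∃ N, ∀ i, N ≤ i → p i = 0) (i : ℕ) {j j' : ℕ} (h : j ≤ j') :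
    hookLen p i j' ≤ hookLen p i j := by
  have := leg_anti (p := p) hp i h
  unfold hookLen
  omega

lemma ncard_Iio (n : ℕ) : (Set.Iio n).ncard = n := by
  rw [← Finset.coe_range, Set.ncard_coe_finset, Finset.card_range]

lemma kb_char (k : ℕ) {p : ℕ → ℕ} (hp : ∃ N, ∀ i, N ≤ i → p i = 0) (i : ℕ) :
    rowKB k p i ≤ p i ∧
      ∀ j, j < p i → (hookLen p i j ≤ k ↔ p i - rowKB k p i ≤ j) := by
  have hfin : {j : ℕ | j < p i ∧ hookLen p i j ≤ k}.Finite :=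
    (Set.finite_Iio (p i)).subset (fun x hx => hx.1)
  have hle : rowKB k p i ≤ p i := by
    have hsub1 : {j : ℕ | j < p i ∧ hookLen p i j ≤ k} ⊆ Set.Iio (p i) := by
      intro x hx
      exact hx.1
    have h2 := Set.ncard_le_ncard hsub1 (Set.finite_Iio (p i))
    rw [ncard_Iio] at h2
    exact h2
  refine ⟨hle, ?_⟩
  by_cases hne : {j : ℕ | j < p i ∧ hookLen p i j ≤ k}.Nonempty
  · set a := sInf {j : ℕ | j < p i ∧ hookLen p i j ≤ k} with ha
    have hmem : a ∈ {j : ℕ | j < p i ∧ hookLen p i j ≤ k} := Nat.sInf_mem hne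
    have hSeq : {j : ℕ | j < p i ∧ hookLen p i j ≤ k} = Set.Ico a (p i) := by
      ext x
      simp only [Set.mem_setOf_eq, Set.mem_Ico]
      constructor
      · intro hx
        exact ⟨Nat.sInf_le hx, hx.1⟩
      · intro hx
        exact ⟨hx.2, le_trans (hook_anti hp i hx.1) hmem.2⟩
    have hcard : rowKB k p i = p i - a := by
      unfold rowKB
      rw [hSeq, ← Finset.coe_Ico, Set.ncard_coe_finset, Nat.card_Ico]
    intro j hj
    have hap : a < p i := hmem.1
    constructor
    · intro hh
      have : j ∈ Set.Ico a (p i) := by rw [← hSeq]; exact ⟨hj, hh⟩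
      have := this.1
      omega
    · intro hh
      have : j ∈ {j : ℕ | j < p i ∧ hookLen p i j ≤ k} := by
        rw [hSeq]
        exact ⟨by omega, hj⟩
      exact this.2
  · have hSe : {j : ℕ | j < p i ∧ hookLen p i j ≤ k} = ∅ :=
      Set.not_nonempty_iff_eq_empty.mp hne
    have hz : rowKB k p i = 0 := by unfold rowKB; rw [hSe, Set.ncard_empty]
    intro j hj
    rw [hz]
    constructor
    · intro hh
      have hj2 : j ∈ {j : ℕ | j < p i ∧ hookLen p i j ≤ k} := ⟨hj, hh⟩
      rw [hSe] at hj2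
      exact absurd hj2 (Set.notMem_empty j)
    · intro hh; omega

lemma core_last_hook {k : ℕ} {p : ℕ → ℕ} (hp : IsPartitionFun p)
    (hcore : IsCore (k + 1) p) {i : ℕ} (hpi : 0 < p i) :
    hookLen p i (p i - 1) ≤ k := by
  obtain ⟨hdec, N, hN⟩ := hp
  have hanti : Antitone p := antitone_nat_of_succ_le hdec
  set T := {n : ℕ | p i ≤ p (i + n)} with hT
  have h0 : 0 ∈ T := by simp [hT]
  have hbdd : BddAbove T := by
    refine ⟨N, fun n hn => ?_⟩
    simp only [hT, Set.mem_setOf_eq] at hn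
    by_contra h
    push_neg at h
    have h2 : p (i + n) = 0 := hN _ (by omega)
    omega
  set m := sSup T with hm
  have hmT : m ∈ T := Nat.sSup_mem ⟨0, h0⟩ hbdd
  have hmem : ∀ n, n ∈ T ↔ n ≤ m := by
    intro n
    constructor
    · exact fun hn => le_csSup hbdd hn
    · intro hn
      have h1 : p (i + m) ≤ p (i + n) := hanti (by omega)
      simp only [hT, Set.mem_setOf_eq] at hmT ⊢
      omega
  have hrow : ∀ t, t ≤ m → p (i + t) = p i := by
    intro t ht
    have h1 : p i ≤ p (i + t) := (hmem t).mpr ht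
    have h2 : p (i + t) ≤ p i := hanti (by omega)
    omega
  have hlegs : ∀ t, t ≤ m →
      {i' : ℕ | i + t < i' ∧ p i - 1 < p i'} = Set.Ioc (i + t) (i + m) := by
    intro t ht
    ext x
    simp only [Set.mem_setOf_eq, Set.mem_Ioc]
    constructor
    · rintro ⟨hx1, hx2⟩
      refine ⟨hx1, ?_⟩
      have hxi : p i ≤ p x := by omega
      have hxT : (x - i) ∈ T := by
        simp only [hT, Set.mem_setOf_eq]
        have hx' : i + (x - i) = x := by omega
        rw [hx']
        exact hxi
      have := (hmem _).mp hxT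
      omega
    · rintro ⟨hx1, hx2⟩
      have h1 : p (i + m) ≤ p x := hanti hx2
      have h2 := hrow m le_rfl
      omega
  have hookt : ∀ t, t ≤ m → hookLen p (i + t) (p i - 1) = 1 + (m - t) := by
    intro t ht
    unfold hookLen
    rw [hlegs t ht, ← Finset.coe_Ioc, Set.ncard_coe_finset, Nat.card_Ioc]
    have := hrow t ht
    omega
  by_contra hbig
  push_neg at hbig
  have h00 : hookLen p i (p i - 1) = 1 + m := by
    have := hookt 0 (Nat.zero_le m)
    simpa using this
  have hmk : k ≤ m := by omega
  have hco := hcore (i + (m - k)) (p i - 1) (by rw [hrow _ (by omega)]; omega)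
  rw [hookt (m - k) (by omega)] at hco
  omega

lemma core_rowKB_pos {k : ℕ} {p : ℕ → ℕ} (hp : IsPartitionFun p)
    (hcore : IsCore (k + 1) p) {i : ℕ} (hpi : 0 < p i) :
    1 ≤ rowKB k p i := by
  have h := core_last_hook hp hcore hpi
  have hfin : {j : ℕ | j < p i ∧ hookLen p i j ≤ k}.Finite :=
    (Set.finite_Iio (p i)).subset (fun x hx => hx.1)
  have hne : {j : ℕ | j < p i ∧ hookLen p i j ≤ k}.Nonempty :=
    ⟨p i - 1, by constructor <;> [omega; exact h]⟩
  unfold rowKB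
  exact (Set.ncard_pos hfin).mpr hne

/-- If `lam ⊆ μ` are `k`-bounded partitions, then `𝔠(lam) ⊆ 𝔠(μ)` for the
corresponding `(k+1)`-cores. -/
theorem stmt5 (k : ℕ) (lam μ γ δ : ℕ → ℕ)
    (hlam : IsPartitionFun lam) (hlamb : ∀ i, lam i ≤ k)
    (hμ : IsPartitionFun μ) (hμb : ∀ i, μ i ≤ k)
    (hγ : IsPartitionFun γ) (hγcore : IsCore (k + 1) γ) (hγc : ∀ i, lam i = rowKB k γ i)
    (hδ : IsPartitionFun δ) (hδcore : IsCore (k + 1) δ) (hδc : ∀ i, μ i = rowKB k δ i)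
    (hsub : ∀ i, lam i ≤ μ i) :
    ∀ i, γ i ≤ δ i := by
  obtain ⟨Nγ, hNγ⟩ := hγ.2
  obtain ⟨Nδ, hNδ⟩ := hδ.2
  set N := Nγ + Nδ with hNdef
  have hγsup : ∃ M, ∀ i, M ≤ i → γ i = 0 := ⟨Nγ, hNγ⟩
  have hδsup : ∃ M, ∀ i, M ≤ i → δ i = 0 := ⟨Nδ, hNδ⟩
  have key : ∀ d i, N ≤ i + d → γ i ≤ δ i := by
    intro d
    induction d with
    | zero =>
      intro i hi
      rw [hNγ i (by omega)]
      exact Nat.zero_le _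
    | succ d ih =>
      intro i hi
      by_contra hlt
      push_neg at hlt
      have hγpos : 0 < γ i := by omega
      have IH : ∀ i', i < i' → γ i' ≤ δ i' := fun i' h => ih i' (by omega)
      have hlpos : 1 ≤ lam i := by
        rw [hγc i]; exact core_rowKB_pos hγ hγcore hγpos
      by_cases hδ0 : δ i = 0
      · have hμ0 : μ i = 0 := by
          rw [hδc i]
          have hSe : {j : ℕ | j < δ i ∧ hookLen δ i j ≤ k} = ∅ := by
            ext j; simp [hδ0]
          unfold rowKB
          rw [hSe, Set.ncard_empty]
        have := hsub i
        omega
      · have hδpos : 0 < δ i := by omega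
        have hμpos : 1 ≤ μ i := by
          rw [hδc i]; exact core_rowKB_pos hδ hδcore hδpos
        obtain ⟨hμle, hδchar⟩ := kb_char k hδsup i
        obtain ⟨hlle, hγchar⟩ := kb_char k hγsup i
        rw [← hδc i] at hμle hδchar
        rw [← hγc i] at hlle hγchar
        have hsubi := hsub i
        -- s' = δ i - μ i, s = γ i - lam i
        set s' := δ i - μ i with hs'
        set s := γ i - lam i with hs
        have hs1 : 1 ≤ s := by omega
        have hss : s' ≤ s - 1 := by omega
        -- F1 : hook of δ at (i, s') is ≤ k
        have F1 : hookLen δ i s' ≤ k := (hδchar s' (by omega)).mpr (by omega)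
        -- F2 : hook of γ at (i, s-1) is > k
        have F2 : ¬ hookLen γ i (s - 1) ≤ k := by
          intro hh
          have := (hγchar (s - 1) (by omega)).mp hh
          omega
        have F3 : hookLen γ i (s - 1) ≠ k + 1 := hγcore i (s - 1) (by omega)
        have E1 : hookLen γ i (s - 1) =
            (γ i - (s - 1)) + {i' : ℕ | i < i' ∧ (s - 1) < γ i'}.ncard := rfl
        have E2 : hookLen δ i s' =
            (δ i - s') + {i' : ℕ | i < i' ∧ s' < δ i'}.ncard := rfl
        have C1 : {i' : ℕ | i < i' ∧ (s - 1) < γ i'}.ncard ≤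
            {i' : ℕ | i < i' ∧ s' < γ i'}.ncard := leg_anti hγsup i hss
        have C2 : {i' : ℕ | i < i' ∧ s' < γ i'}.ncard ≤
            {i' : ℕ | i < i' ∧ s' < δ i'}.ncard := leg_mono_p hδsup i s' IH
        omega
  intro i
  exact key N i (by omega)
end

section
/- Let λ ⊆ μ be k-bounded partitions such that the skew diagram 𝔠(μ)/𝔠(λ) of the corresponding (k+1)-cores is a horizontal strip (at most one cell per column). Then μ/λ is a horizontal strip, i.e., λ_r ≥ μ_{r+1} for all r. -/
open scoped Classical

lemma part_antitone {p : ℕ → ℕ} (hp : IsPartitionFun p) : Antitone p :=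
  antitone_nat_of_succ_le hp.1

lemma conj_finite {p : ℕ → ℕ} (hp : IsPartitionFun p) (j : ℕ) :
    {i : ℕ | j < p i}.Finite := by
  obtain ⟨N, hN⟩ := hp.2
  apply Set.Finite.subset (Set.finite_Iio N)
  intro i hi
  by_contra h
  simp only [Set.mem_Iio, not_lt] at h
  have := hN i h
  simp [Set.mem_setOf_eq, this] at hi

lemma dc_eq_Iio (S : Set ℕ) (hf : S.Finite) (hdc : ∀ a b : ℕ, a ≤ b → b ∈ S → a ∈ S) :
    S = Set.Iio S.ncard := by
  rcases S.eq_empty_or_nonempty with h | h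
  · rw [h, Set.ncard_empty]
    ext x
    simp
  · have hne : hf.toFinset.Nonempty := by
      obtain ⟨x, hx⟩ := h
      exact ⟨x, hf.mem_toFinset.mpr hx⟩
    set m := hf.toFinset.max' hne with hm
    have hmS : m ∈ S := hf.mem_toFinset.mp (hf.toFinset.max'_mem hne)
    have hSm : S = Set.Iic m := by
      ext x
      constructor
      · intro hx
        exact hf.toFinset.le_max' x (hf.mem_toFinset.mpr hx)
      · intro hx
        exact hdc x m hx hmS
    have : S.ncard = m + 1 := by
      rw [hSm]
      rw [show Set.Iic m = ↑(Finset.Iic m) by simp, Set.ncard_coe_finset, Nat.card_Iic]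
    rw [this, hSm]
    ext x
    simp [Nat.lt_succ_iff]

lemma lt_iff_lt_conj {p : ℕ → ℕ} (hp : IsPartitionFun p) (i j : ℕ) :
    j < p i ↔ i < conjFun p j := by
  have h := dc_eq_Iio {i : ℕ | j < p i} (conj_finite hp j)
    (fun a b hab hb => lt_of_lt_of_le hb (part_antitone hp hab))
  have hc : conjFun p j = {i : ℕ | j < p i}.ncard := rfl
  constructor
  · intro hij
    have h2 : i ∈ {i : ℕ | j < p i} := hij
    rw [h] at h2
    rw [hc]
    exact h2
  · intro hij
    have h2 : i ∈ Set.Iio ({i : ℕ | j < p i}.ncard) := by rw [← hc]; exact hij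
    rw [← h] at h2
    exact h2

lemma conj_anti {p : ℕ → ℕ} (hp : IsPartitionFun p) : Antitone (conjFun p) := by
  intro j j' hjj'
  apply Set.ncard_le_ncard _ (conj_finite hp j)
  intro i hi
  exact lt_of_le_of_lt hjj' hi

lemma conj_mono {p q : ℕ → ℕ} (hq : IsPartitionFun q) (hpq : ∀ i, p i ≤ q i) (j : ℕ) :
    conjFun p j ≤ conjFun q j := by
  apply Set.ncard_le_ncard _ (conj_finite hq j)
  intro i hi
  exact lt_of_lt_of_le hi (hpq i)

lemma hookLen_eq {p : ℕ → ℕ} (hp : IsPartitionFun p) (i j : ℕ) :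
    hookLen p i j = (p i - j) + (conjFun p j - (i + 1)) := by
  unfold hookLen
  congr 1
  have hset : {i' : ℕ | i < i' ∧ j < p i'} = Set.Ico (i + 1) (conjFun p j) := by
    ext i'
    simp only [Set.mem_setOf_eq, Set.mem_Ico, Nat.add_one_le_iff]
    rw [lt_iff_lt_conj hp]
  rw [hset, show Set.Ico (i + 1) (conjFun p j) = ↑(Finset.Ico (i + 1) (conjFun p j)) from
    (Finset.coe_Ico _ _).symm, Set.ncard_coe_finset, Nat.card_Ico]

lemma up_eq_Ico (S : Set ℕ) (n : ℕ) (hub : ∀ j ∈ S, j < n)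
    (hup : ∀ j ∈ S, ∀ j', j ≤ j' → j' < n → j' ∈ S) :
    S = Set.Ico (n - S.ncard) n := by
  rcases S.eq_empty_or_nonempty with h | h
  · rw [h, Set.ncard_empty, Nat.sub_zero, Set.Ico_self]
  · have hmem : sInf S ∈ S := Nat.sInf_mem h
    have hS : S = Set.Ico (sInf S) n := by
      ext j
      constructor
      · intro hj; exact ⟨Nat.sInf_le hj, hub j hj⟩
      · rintro ⟨h1, h2⟩; exact hup _ hmem _ h1 h2
    have hcard : S.ncard = n - sInf S := by
      have hIco : (Set.Ico (sInf S) n).ncard = n - sInf S := by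
        rw [← Finset.coe_Ico, Set.ncard_coe_finset, Nat.card_Ico]
      rw [← hS] at hIco
      exact hIco
    have hle : sInf S ≤ n := le_of_lt (hub _ hmem)
    rw [hcard, Nat.sub_sub_self hle]
    exact hS

lemma rowKB_le (k : ℕ) (p : ℕ → ℕ) (i : ℕ) : rowKB k p i ≤ p i := by
  unfold rowKB
  have hsub : {j : ℕ | j < p i ∧ hookLen p i j ≤ k} ⊆ Set.Iio (p i) := fun j hj => hj.1
  have h1 := Set.ncard_le_ncard hsub (Set.finite_Iio _)
  rwa [← Finset.coe_range, Set.ncard_coe_finset, Finset.card_range] at h1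

/-- The set of cells with hook length ≤ k in a row is the suffix `Ico (p i - rowKB) (p i)`. -/
lemma rowKB_suffix {p : ℕ → ℕ} (hp : IsPartitionFun p) (k i : ℕ) :
    {j : ℕ | j < p i ∧ hookLen p i j ≤ k} =
      Set.Ico (p i - rowKB k p i) (p i) := by
  apply up_eq_Ico
  · exact fun j hj => hj.1
  · rintro j ⟨hj1, hj2⟩ j' hjj' hj'
    refine ⟨hj', ?_⟩
    rw [hookLen_eq hp] at hj2 ⊢
    have h1 : p i - j' ≤ p i - j := Nat.sub_le_sub_left hjj' _
    have h2 : conjFun p j' - (i + 1) ≤ conjFun p j - (i + 1) :=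
      Nat.sub_le_sub_right (conj_anti hp hjj') _
    omega

/-- If `lam ⊆ μ` are `k`-bounded partitions whose corresponding `(k+1)`-cores satisfy
that `𝔠(μ)/𝔠(lam)` is a horizontal strip, then `μ/lam` is a horizontal strip, i.e.
`lam_r ≥ μ_{r+1}` for all `r`. -/
theorem stmt16 (k : ℕ) (lam μ γ δ : ℕ → ℕ)
    (hlam : IsPartitionFun lam) (hlamb : ∀ i, lam i ≤ k)
    (hμ : IsPartitionFun μ) (hμb : ∀ i, μ i ≤ k)
    (hγ : IsPartitionFun γ) (hγcore : IsCore (k + 1) γ) (hγc : ∀ i, lam i = rowKB k γ i)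
    (hδ : IsPartitionFun δ) (hδcore : IsCore (k + 1) δ) (hδc : ∀ i, μ i = rowKB k δ i)
    (hsublam : ∀ i, lam i ≤ μ i)
    (hsub : ∀ i, γ i ≤ δ i)
    (hhoriz : ∀ c i i', γ i ≤ c → c < δ i → γ i' ≤ c → c < δ i' → i = i') :
    ∀ r, μ (r + 1) ≤ lam r := by
  intro r
  by_contra hcon
  push_neg at hcon
  have hγa := part_antitone hγ
  have hδa := part_antitone hδ
  -- the strip condition forces δ_{r+1} ≤ γ_r
  have hle : δ (r + 1) ≤ γ r := by
    by_contra h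
    push_neg at h
    have := hhoriz (γ r) r (r + 1) le_rfl
      (lt_of_lt_of_le h (hδa (Nat.le_succ r))) (hγa (Nat.le_succ r)) h
    omega
  -- suffix descriptions of the two rows
  have hEδ := rowKB_suffix hδ k (r + 1)
  have hEγ := rowKB_suffix hγ k r
  -- cardinality bounds
  have hμr : μ (r + 1) = rowKB k δ (r + 1) := hδc (r + 1)
  have hlamr : lam r = rowKB k γ r := hγc r
  have hcδ : rowKB k δ (r + 1) ≤ δ (r + 1) := rowKB_le k δ (r + 1)
  -- basic inequalities
  have hμpos : 0 < μ (r + 1) := by omega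
  have hμle : μ (r + 1) ≤ δ (r + 1) := by rw [hμr]; exact hcδ
  have hlamlt : lam r < γ r := by omega
  set a := δ (r + 1) - μ (r + 1) with ha
  set b := γ r - lam r with hb
  -- the cell (r+1, a) of δ has hook ≤ k
  have haS : a ∈ {j : ℕ | j < δ (r+1) ∧ hookLen δ (r+1) j ≤ k} := by
    rw [hEδ]
    constructor
    · rw [ha, hμr]
    · omega
  obtain ⟨haD, hhookδ⟩ := haS
  -- the cell (r, b-1) of γ has hook > k, hence ≥ k+2 by the core condition
  have hbG : b - 1 < γ r := by omega
  have hbnS : (b - 1) ∉ {j : ℕ | j < γ r ∧ hookLen γ r j ≤ k} := by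
    rw [hEγ]
    intro hmem
    have := hmem.1
    rw [← hlamr] at this
    omega
  have hhookγgt : k < hookLen γ r (b - 1) := by
    by_contra h
    push_neg at h
    exact hbnS ⟨hbG, h⟩
  have hhookγne : hookLen γ r (b - 1) ≠ k + 1 := hγcore r (b - 1) hbG
  have hhookγ : k + 2 ≤ hookLen γ r (b - 1) := by omega
  -- rewrite hooks with the conjugate formula
  rw [hookLen_eq hδ] at hhookδ
  rw [hookLen_eq hγ] at hhookγ
  -- column-count facts
  have h3 : r + 1 ≤ conjFun γ (b - 1) := (lt_iff_lt_conj hγ r (b - 1)).mp hbG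
  have h4 : r + 2 ≤ conjFun δ a := (lt_iff_lt_conj hδ (r + 1) a).mp haD
  have hab : a < b := by omega
  have h5 : conjFun γ (b - 1) ≤ conjFun δ a :=
    le_trans (conj_anti hγ (by omega : a ≤ b - 1)) (conj_mono hδ hsub a)
  omega
end
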